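/- arXiv:2101.00392 — 2 statements merged into one kernel-verified Lean document; each statement's English description precedes it below -/
import Mathlib

section
/- (Theorem 1, condition i) Let N ≥ 2 and let E : Fin N → Fin N → Prop, C : Fin N → Fin N → Bool, T : Fin N → Fin N → ℂ with T a j ≠ 0 ↔ E a j, and let Ψ be the postselected coefficient function. If Ψ is genuinely entangled, then for every j : Fin N there exist maximally matchable edges (a, j) and (b, j) of E with C a j ≠ C b j; i.e., every vertex of the perfect matching diagram has (at least) two incoming edges of different colors. -/
/-!
If every perfect matching sends the same color `c` into the detector `j`, then `Ψ s` vanishes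
unless `s j = c`, so `Ψ` factors as the indicator of `s j = c` times `Ψ` with the `j`-th outcome
overwritten by `c`. That is a separation of `Ψ` across `{j}`, which is a proper nonempty subset
as soon as there are two detectors.
-/

open scoped Classical

/-- The postselected (bosonic) coefficient function of an LQN:
`Ψ s = Σ_{σ PM of E with outcome string s} Π_a T a (σ a)`. -/
noncomputable def lqnPsi {V : Type*} [Fintype V] [DecidableEq V]
    (E : V → V → Prop) (C : V → V → Bool) (T : V → V → ℂ)
    (s : V → Bool) : ℂ :=
  ∑ σ ∈ Finset.univ.filter (fun σ : Equiv.Perm V =>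
      (∀ a, E a (σ a)) ∧ ∀ j, C (σ⁻¹ j) j = s j),
    ∏ a, T a (σ a)

def SeparableAcross {V β R : Type*} [Mul R] (Ψ : (V → β) → R) (S : Set V) : Prop :=
  ∃ f g : (V → β) → R,
    (∀ s t : V → β, (∀ j ∈ S, s j = t j) → f s = f t) ∧
    (∀ s t : V → β, (∀ j ∉ S, s j = t j) → g s = g t) ∧
    ∀ s : V → β, Ψ s = f s * g s

theorem separableAcross_singleton_of_eq_zero {V β R : Type*} [DecidableEq V] [MulZeroOneClass R]
    (Ψ : (V → β) → R) (j : V) (c : β) (hΨ : ∀ s, s j ≠ c → Ψ s = 0) :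
    SeparableAcross Ψ {j} := by
  refine ⟨fun s => if s j = c then 1 else 0, fun s => Ψ (Function.update s j c), ?_, ?_, ?_⟩
  · intro s t hst
    simp only [hst j rfl]
  · intro s t hst
    refine congrArg Ψ (funext fun x => ?_)
    rcases eq_or_ne x j with rfl | hx
    · simp only [Function.update_self]
    · simp only [Function.update_of_ne hx, hst x hx]
  · intro s
    dsimp only
    by_cases hs : s j = c
    · rw [if_pos hs, one_mul, ← hs, Function.update_eq_self]
    · rw [if_neg hs, zero_mul, hΨ s hs]

section lqnPsi

variable {V : Type*} [Fintype V] [DecidableEq V]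
  (E : V → V → Prop) (C : V → V → Bool) (T : V → V → ℂ)

theorem exists_perfectMatching_of_lqnPsi_ne_zero (hΨ : lqnPsi E C T ≠ 0) :
    ∃ σ : Equiv.Perm V, ∀ a, E a (σ a) := by
  obtain ⟨s, hs⟩ := Function.ne_iff.mp hΨ
  obtain ⟨σ, hσ, -⟩ := Finset.exists_ne_zero_of_sum_ne_zero hs
  exact ⟨σ, (Finset.mem_filter.mp hσ).2.1⟩

theorem lqnPsi_eq_zero_of_color_ne {j : V} {c : Bool}
    (hcolor : ∀ σ : Equiv.Perm V, (∀ a, E a (σ a)) → C (σ⁻¹ j) j = c)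
    (s : V → Bool) (hs : s j ≠ c) : lqnPsi E C T s = 0 := by
  refine Finset.sum_eq_zero fun σ hσ => absurd ?_ hs
  obtain ⟨hE, hout⟩ := (Finset.mem_filter.mp hσ).2
  exact (hout j).symm.trans (hcolor σ hE)

end lqnPsi

theorem lqn_thm1_colors_general (N : ℕ) (hN : 2 ≤ N)
    (E : Fin N → Fin N → Prop) (C : Fin N → Fin N → Bool)
    (T : Fin N → Fin N → ℂ)
    (hΨ : lqnPsi E C T ≠ 0)
    (hgen : ∀ S : Set (Fin N), S.Nonempty → S ≠ Set.univ →
      ¬ ∃ f g : (Fin N → Bool) → ℂ,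
        (∀ s t : Fin N → Bool, (∀ j ∈ S, s j = t j) → f s = f t) ∧
        (∀ s t : Fin N → Bool, (∀ j ∉ S, s j = t j) → g s = g t) ∧
        ∀ s : Fin N → Bool, lqnPsi E C T s = f s * g s) :
    ∀ j : Fin N, ∃ a b : Fin N,
      (∃ σ : Equiv.Perm (Fin N), (∀ x, E x (σ x)) ∧ σ a = j) ∧
      (∃ σ : Equiv.Perm (Fin N), (∀ x, E x (σ x)) ∧ σ b = j) ∧
      C a j ≠ C b j := by
  intro j
  by_contra! hsame
  obtain ⟨σ₀, hσ₀⟩ := exists_perfectMatching_of_lqnPsi_ne_zero E C T hΨ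
  have hcolor : ∀ σ : Equiv.Perm (Fin N), (∀ a, E a (σ a)) → C (σ⁻¹ j) j = C (σ₀⁻¹ j) j :=
    fun σ hσ => hsame _ _ ⟨σ, hσ, σ.apply_symm_apply j⟩ ⟨σ₀, hσ₀, σ₀.apply_symm_apply j⟩
  have : Nontrivial (Fin N) := Fin.nontrivial_iff_two_le.mpr hN
  exact hgen {j} (Set.singleton_nonempty j) (Set.singleton_ne_univ j)
    (separableAcross_singleton_of_eq_zero _ j _ (lqnPsi_eq_zero_of_color_ne E C T hcolor))

/-- Theorem 1, condition i: If the postselected coefficient function `Ψ`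
is genuinely entangled (nonzero and not separable across any bipartition
`∅ ⊊ S ⊊ Fin N`), then every vertex `j` of the perfect matching diagram has two incoming
maximally matchable edges of different colors. -/
theorem lqn_thm1_colors (N : ℕ) (hN : 2 ≤ N)
    (E : Fin N → Fin N → Prop) (C : Fin N → Fin N → Bool)
    (T : Fin N → Fin N → ℂ) (hT : ∀ a j, T a j ≠ 0 ↔ E a j)
    (hΨ : lqnPsi E C T ≠ 0)
    (hgen : ∀ S : Set (Fin N), S.Nonempty → S ≠ Set.univ →
      ¬ ∃ f g : (Fin N → Bool) → ℂ,
        (∀ s t : Fin N → Bool, (∀ j ∈ S, s j = t j) → f s = f t) ∧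
        (∀ s t : Fin N → Bool, (∀ j ∉ S, s j = t j) → g s = g t) ∧
        ∀ s : Fin N → Bool, lqnPsi E C T s = f s * g s) :
    ∀ j : Fin N, ∃ a b : Fin N,
      (∃ σ : Equiv.Perm (Fin N), (∀ x, E x (σ x)) ∧ σ a = j) ∧
      (∃ σ : Equiv.Perm (Fin N), (∀ x, E x (σ x)) ∧ σ b = j) ∧
      C a j ≠ C b j :=
  lqn_thm1_colors_general N hN E C T hΨ hgen
end

section
/- (Dicke D₂ᴺ construction: support) Let N ≥ 2 and consider the edge relation E on Fin N given by E a j ↔ (a = j ∨ (a ∈ {0,1} ∧ j ∉ {0,1}) ∨ (a ∉ {0,1} ∧ j ∈ {0,1})), with colors C a j = false if a ∈ {0,1} and C a j = true otherwise. Then the set of outcome strings of the perfect matchings of E is exactly the set of strings s : Fin N → Bool having exactly two coordinates equal to false; i.e., the postselected state of this LQN is supported exactly on the computational-basis states of the Dicke state D₂ᴺ (two particles in ↓). -/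
/-!
The ↓-colored particles are exactly those of the source set `S = {0, 1}`, so the ↓
coordinates of the outcome of a perfect matching `σ` form the set `σ(S)`, which has `|S|`
elements. Conversely, given `T` with `|T| = |S|`, interchange `S \ T` and `T \ S` by any
bijection and fix everything else: every particle either stays put or crosses between `S`
and its complement, so this is a perfect matching, and it maps `S` onto `T`.
-/

open scoped Classical

open Finset

namespace LinearQuantumNetwork

variable {α : Type*}

def crossEdge (S : Finset α) (a j : α) : Prop :=
  a = j ∨ (a ∈ S ∧ j ∉ S) ∨ (a ∉ S ∧ j ∈ S)

def sourceColor [DecidableEq α] (S : Finset α) (a _j : α) : Bool :=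
  if a ∈ S then false else true

def outcome (C : α → α → Bool) (σ : Equiv.Perm α) (j : α) : Bool :=
  C (σ⁻¹ j) j

theorem filter_outcome_sourceColor_eq_false [Fintype α] [DecidableEq α] (S : Finset α)
    (σ : Equiv.Perm α) :
    univ.filter (fun j => outcome (sourceColor S) σ j = false) = S.map σ.toEmbedding := by
  ext j
  simp [outcome, sourceColor, Equiv.Perm.inv_def]

theorem eq_of_filter_eq_false_eq [Fintype α] {s t : α → Bool}
    (h : univ.filter (fun j => s j = false) = univ.filter (fun j => t j = false)) : s = t := by
  funext j
  have hj := congrArg (j ∈ ·) h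
  simp only [mem_filter, mem_univ, true_and, eq_iff_iff] at hj
  cases hs : s j <;> cases ht : t j <;> simp_all

theorem exists_perm_interchanging_of_card_eq [DecidableEq α] {A B : Finset α}
    (hAB : Disjoint A B) (h : #A = #B) :
    ∃ σ : Equiv.Perm α,
      (∀ x ∈ A, σ x ∈ B) ∧ (∀ x ∈ B, σ x ∈ A) ∧ ∀ x, x ∉ A → x ∉ B → σ x = x := by
  let f := A.equivOfCardEq h
  let g : α → α := fun x =>
    if hA : x ∈ A then f ⟨x, hA⟩ else if hB : x ∈ B then f.symm ⟨x, hB⟩ else x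
  have hg : Function.Involutive g := by
    intro x
    by_cases hA : x ∈ A
    · have hfB : (f ⟨x, hA⟩ : α) ∉ A := disjoint_right.mp hAB (f ⟨x, hA⟩).2
      simp [g, hA, hfB]
    by_cases hB : x ∈ B <;> simp [g, hA, hB]
  refine ⟨hg.toPerm g, fun x hA => ?_, fun x hB => ?_, fun x hA hB => ?_⟩
  · simp [g, hA]
  · simp [g, hB, disjoint_right.mp hAB hB]
  · simp [g, hA, hB]

theorem exists_crossEdge_matching_map_eq [DecidableEq α] {S T : Finset α} (h : #S = #T) :
    ∃ σ : Equiv.Perm α, S.map σ.toEmbedding = T ∧ ∀ a, crossEdge S a (σ a) := by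
  obtain ⟨σ, hST, hTS, hfix⟩ :=
    exists_perm_interchanging_of_card_eq disjoint_sdiff_sdiff (card_sdiff_comm h)
  refine ⟨σ, eq_of_subset_of_card_le ?_ (by simp [h]), fun a => ?_⟩
  · intro y hy
    obtain ⟨x, hx, rfl⟩ := mem_map.mp hy
    rw [Equiv.coe_toEmbedding]
    by_cases hxT : x ∈ T
    · rw [hfix x (by simp [hxT]) (by simp [hx])]
      exact hxT
    · exact (mem_sdiff.mp (hST x (mem_sdiff.mpr ⟨hx, hxT⟩))).1
  · unfold crossEdge
    by_cases haS : a ∈ S <;> by_cases haT : a ∈ T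
    · exact Or.inl (hfix a (by simp [haT]) (by simp [haS])).symm
    · exact Or.inr (Or.inl ⟨haS, (mem_sdiff.mp (hST a (by simp [haS, haT]))).2⟩)
    · exact Or.inr (Or.inr ⟨haS, (mem_sdiff.mp (hTS a (by simp [haS, haT]))).1⟩)
    · exact Or.inl (hfix a (by simp [haS]) (by simp [haT])).symm

theorem outcome_image_crossEdge_matchings [Fintype α] [DecidableEq α] (S : Finset α) :
    outcome (sourceColor S) '' {σ | ∀ a, crossEdge S a (σ a)} =
      {s | #(univ.filter (fun j => s j = false)) = #S} := by
  ext s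
  constructor
  · rintro ⟨σ, -, rfl⟩
    simp [filter_outcome_sourceColor_eq_false]
  · intro hs
    obtain ⟨σ, hσS, hσ⟩ := exists_crossEdge_matching_map_eq hs.symm
    refine ⟨σ, hσ, eq_of_filter_eq_false_eq ?_⟩
    rw [filter_outcome_sourceColor_eq_false, hσS]

end LinearQuantumNetwork

open LinearQuantumNetwork in
/-- Dicke `D₂ᴺ` construction: support: On `Fin N` (`N ≥ 2`) with edge
relation `E a j ↔ (a = j ∨ (a ∈ {0,1} ∧ j ∉ {0,1}) ∨ (a ∉ {0,1} ∧ j ∈ {0,1}))` and colors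
`C a j = false` iff `a ∈ {0,1}`, the set of outcome strings of the perfect matchings of
`E` is exactly the set of strings with exactly two `false` coordinates: the postselected
state is supported exactly on the basis states of the Dicke state `D₂ᴺ`. -/
theorem dicke_support (N : ℕ) [NeZero N] (hN : 2 ≤ N)
    (E : Fin N → Fin N → Prop)
    (hE : ∀ a j, E a j ↔ (a = j ∨
      (a ∈ ({0, 1} : Set (Fin N)) ∧ j ∉ ({0, 1} : Set (Fin N))) ∨
      (a ∉ ({0, 1} : Set (Fin N)) ∧ j ∈ ({0, 1} : Set (Fin N)))))
    (C : Fin N → Fin N → Bool)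
    (hC : ∀ a j, C a j = if a ∈ ({0, 1} : Set (Fin N)) then false else true) :
    (fun σ : Equiv.Perm (Fin N) => fun j => C (σ⁻¹ j) j) ''
        {σ : Equiv.Perm (Fin N) | ∀ a, E a (σ a)} =
      {s : Fin N → Bool | (Finset.univ.filter (fun j => s j = false)).card = 2} := by
  have hE' : E = crossEdge {0, 1} := by
    funext a j
    simp only [hE, crossEdge, ← coe_pair, mem_coe]
  have hC' : C = sourceColor {0, 1} := by
    funext a j
    simp only [hC, sourceColor, ← coe_pair, mem_coe]
  have h01 : (0 : Fin N) ≠ 1 := by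
    rw [Ne, Fin.ext_iff, Fin.val_zero, Fin.val_one', Nat.one_mod_eq_one.mpr (by omega)]
    exact zero_ne_one
  subst hE' hC'
  rw [← card_pair h01]
  exact outcome_image_crossEdge_matchings {0, 1}
end
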